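/- Let K be a finite field of characteristic 2, G a finite group, and (V,Q) an anisotropic non-degenerate equivariant quadratic KG-module whose socle is a direct sum of trivial modules. Then dim_K(soc V) ≤ 2; if dim = 2 then soc V is a non-degenerate orthogonal summand isometric to N(K) and equals V; if dim = 1 then soc V = ⟨e⟩ with Q(e) ≠ 0 and V is indecomposable. -/

import Mathlib

/-!
Socle vectors are fixed by `G`, so each spans a `KG`-submodule and `Q` is anisotropic on the socle
`S` in the usual sense; by Chevalley–Warning this forces `dim S ≤ 2`. In characteristic 2, if
`v` is polar-orthogonal to `u` then `Q (u + c v) = Q u + c² Q v`, and over a perfect field `c` can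
be chosen to make this vanish: an anisotropic form with a non-zero polar-radical vector is at most
one-dimensional. So for `dim S = 2` the polar form is non-degenerate on `S`; then `S^⊥` is a
`KG`-submodule meeting the socle trivially, hence zero, and `S = V`. Normalising `Q e = 1`,
`polar Q e f = 1`, a root `x` of `X² + X + Q f` would make `x e + f` isotropic. For `dim S = 1`,
every non-zero `KG`-submodule contains `S`, so `V` is indecomposable.
-/

open QuadraticMap

variable {K : Type*} [Field K] {G : Type*} [Group G]
variable {V W : Type*} [AddCommGroup V] [Module K V] [AddCommGroup W] [Module K W]

/-- `U` is a `KG`-submodule, i.e. invariant under the representation `ρ`. -/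
def IsSubrep (ρ : Representation K G V) (U : Submodule K V) : Prop :=
  ∀ g : G, ∀ v ∈ U, ρ g v ∈ U

/-- The quadratic form `Q` is `G`-invariant. -/
def GInvariantQF (ρ : Representation K G V) (Q : QuadraticForm K V) : Prop :=
  ∀ g v, Q (ρ g v) = Q v

/-- Orthogonal complement of a submodule with respect to the polarization of `Q`. -/
def qperp (Q : QuadraticForm K V) (U : Submodule K V) : Submodule K V :=
  LinearMap.BilinForm.orthogonal Q.polarBilin U

/-- `Q` is non-degenerate: the radical of its polarization is zero. -/
def QNondeg (Q : QuadraticForm K V) : Prop :=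
  LinearMap.BilinForm.Nondegenerate Q.polarBilin

/-- `(V, Q)` is metabolic: there is a `KG`-submodule `N` with `N = N^⊥` and `Q(N) = 0`. -/
def Metabolic (ρ : Representation K G V) (Q : QuadraticForm K V) : Prop :=
  ∃ N : Submodule K V, IsSubrep ρ N ∧ N = qperp Q N ∧ ∀ v ∈ N, Q v = 0

/-- `(V, Q)` is anisotropic: `Q` does not vanish on any non-zero `KG`-submodule. -/
def AnisotropicRep (ρ : Representation K G V) (Q : QuadraticForm K V) : Prop :=
  ∀ U : Submodule K V, IsSubrep ρ U → (∀ v ∈ U, Q v = 0) → U = ⊥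

/-- The product (orthogonal direct sum) of two representations. -/
def prodRep (ρ : Representation K G V) (σ : Representation K G W) :
    Representation K G (V × W) :=
  ⟨⟨fun g => (ρ g).prodMap (σ g), by ext v <;> simp⟩, fun g h => by ext v <;> simp⟩

/-- `V` is a simple `KG`-module. -/
def SimpleRep (ρ : Representation K G V) : Prop :=
  Nontrivial V ∧ ∀ U : Submodule K V, IsSubrep ρ U → U = ⊥ ∨ U = ⊤

/-- `V` is a self-dual `KG`-module. -/
def SelfDualRep (ρ : Representation K G V) : Prop :=
  ∃ f : V ≃ₗ[K] Module.Dual K V, ∀ g v, f (ρ g v) = ρ.dual g (f v)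

/-- The socle: the sum of all simple `KG`-submodules. -/
def socleRep (ρ : Representation K G V) : Submodule K V :=
  sSup {U : Submodule K V | IsSubrep ρ U ∧ U ≠ ⊥ ∧
    ∀ U' : Submodule K V, U' ≤ U → IsSubrep ρ U' → U' = ⊥ ∨ U' = U}

namespace QuadraticMap

variable {Q : QuadraticForm K V}

open MvPolynomial in
theorem Anisotropic.finrank_le_two [Finite K] [FiniteDimensional K V] (hQ : Q.Anisotropic) :
    Module.finrank K V ≤ 2 := by
  classical
  have := Fintype.ofFinite K
  obtain ⟨B, rfl⟩ := LinearMap.BilinMap.toQuadraticMap_surjective Q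
  set b := Module.finBasis K V
  -- `Q` in the coordinates of `b`: a polynomial of degree `≤ 2`, to which Chevalley–Warning applies
  set f : MvPolynomial (Fin (Module.finrank K V)) K :=
    ∑ i, ∑ j, B (b i) (b j) • (X i * X j)
  have heval (x) : eval x f = B.toQuadraticMap (b.equivFun.symm x) := by
    simp only [f, map_sum, smul_eval, map_mul, eval_X, Module.Basis.equivFun_symm_apply,
      LinearMap.BilinMap.toQuadraticMap_apply, map_smul, LinearMap.coe_sum, LinearMap.coe_smul,
      Finset.sum_apply, Pi.smul_apply, smul_eq_mul, Finset.mul_sum]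
    rw [Finset.sum_comm]
    exact Finset.sum_congr rfl fun i _ => Finset.sum_congr rfl fun j _ => by ring
  have hdeg : f.totalDegree ≤ 2 := by
    refine (totalDegree_finsetSum _ _).trans <| Finset.sup_le fun i _ => ?_
    refine (totalDegree_finsetSum _ _).trans <| Finset.sup_le fun j _ => ?_
    grw [totalDegree_smul_le, totalDegree_mul, totalDegree_X, totalDegree_X]
  by_contra! h3
  have hdvd := char_dvd_card_solutions (ringChar K) (f := f) (by simpa using hdeg.trans_lt h3)
  have hzero : eval 0 f = 0 := by rw [heval, map_zero, map_zero]
  have hcard := (CharP.prime_ringChar K).two_le.trans <|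
    Nat.le_of_dvd (Fintype.card_pos_iff.mpr ⟨⟨0, hzero⟩⟩) hdvd
  obtain ⟨⟨x, hx⟩, hx0⟩ := Fintype.exists_ne_of_one_lt_card hcard ⟨0, hzero⟩
  rw [heval] at hx
  exact hx0 <| Subtype.ext <| b.equivFun.symm.injective <| by simpa using hQ _ hx

section CharTwo

variable [CharP K 2]

theorem polar_self_of_charTwo (x : V) : polar Q x x = 0 := by
  rw [polar_self, two_nsmul, CharTwo.add_self_eq_zero]

theorem Anisotropic.exists_smul_eq_of_polar_eq_zero [PerfectRing K 2] (hQ : Q.Anisotropic)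
    {u v : V} (hv : v ≠ 0) (huv : polar Q u v = 0) : ∃ c : K, c • v = u := by
  set c := (frobeniusEquiv K 2).symm (Q u / Q v)
  have hc : c ^ 2 * Q v = Q u := by
    rw [frobeniusEquiv_symm_pow_p, div_mul_cancel₀ _ (mt (hQ v) hv)]
  refine ⟨-c, ?_⟩
  have : Q (u + c • v) = 0 := by
    rw [QuadraticMap.map_add Q, QuadraticMap.map_smul, polar_smul_right, huv, smul_eq_mul,
      ← pow_two, hc, smul_zero, add_zero, CharTwo.add_self_eq_zero]
  rw [neg_smul, ← eq_neg_of_add_eq_zero_left (hQ _ this)]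

theorem Anisotropic.finrank_le_one_of_polar_eq_zero [PerfectRing K 2] (hQ : Q.Anisotropic)
    {v : V} (hv : v ≠ 0) (h : ∀ u, polar Q u v = 0) : Module.finrank K V ≤ 1 :=
  finrank_le_one v fun u => hQ.exists_smul_eq_of_polar_eq_zero hv (h u)

open Polynomial in
theorem Anisotropic.irreducible_X_sq_add_X_add_C (hQ : Q.Anisotropic) {e f : V} (he : Q e = 1)
    (hef : polar Q e f = 1) : Irreducible (X ^ 2 + X + C (Q f)) := by
  have hdeg : (X ^ 2 + X + C (Q f)).natDegree = 2 := by compute_degree!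
  refine irreducible_of_degree_le_three_of_not_isRoot (by simp [hdeg]) fun x hx => ?_
  have hQx : Q (x • e + f) = 0 := by
    rw [QuadraticMap.map_add Q, QuadraticMap.map_smul, polar_smul_left, he, hef]
    simpa [← pow_two, add_right_comm] using hx
  have := congrArg (polar Q e) (hQ _ hQx)
  rw [polar_add_right, polar_smul_right, polar_self_of_charTwo, hef, polar_zero_right] at this
  simp at this

theorem Anisotropic.exists_basis_of_finrank_eq_two [PerfectRing K 2] (hQ : Q.Anisotropic)
    (hV : Module.finrank K V = 2) :
    ∃ (α : K) (b : Module.Basis (Fin 2) K V),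
      Irreducible (Polynomial.X ^ 2 + Polynomial.X + Polynomial.C α) ∧
      Q (b 0) = α ∧ Q (b 1) = 1 ∧ polar Q (b 1) (b 0) = 1 := by
  have : Nontrivial V := Module.nontrivial_of_finrank_eq_succ hV
  obtain ⟨v, hv⟩ := exists_ne (0 : V)
  set e := (frobeniusEquiv K 2).symm (Q v)⁻¹ • v
  have he : Q e = 1 := by
    rw [QuadraticMap.map_smul, smul_eq_mul, ← pow_two, frobeniusEquiv_symm_pow_p,
      inv_mul_cancel₀ (mt (hQ v) hv)]
  have he0 : e ≠ 0 := by rintro h; simp [h] at he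
  obtain ⟨w, hw⟩ : ∃ w, polar Q w e ≠ 0 := by
    by_contra! h
    have := hQ.finrank_le_one_of_polar_eq_zero he0 h
    omega
  set f := (polar Q w e)⁻¹ • w
  have hef : polar Q e f = 1 := by
    rw [polar_smul_right, smul_eq_mul, polar_comm Q e w, inv_mul_cancel₀ hw]
  have hli : LinearIndependent K ![f, e] := by
    refine linearIndependent_fin2.mpr ⟨by simpa, fun a ha => ?_⟩
    simp only [Matrix.cons_val_one, Matrix.cons_val_zero] at ha
    rw [← ha, polar_smul_right, polar_self_of_charTwo, smul_zero] at hef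
    exact zero_ne_one hef
  let b := basisOfLinearIndependentOfCardEqFinrank hli (by simp [hV])
  refine ⟨Q f, b, hQ.irreducible_X_sq_add_X_add_C he hef, ?_⟩
  simp [b, he, hef]

end CharTwo

end QuadraticMap

section Representation

variable {ρ : Representation K G V} {Q : QuadraticForm K V} {U : Submodule K V}

theorem isSubrep_sSup {s : Set (Submodule K V)} (hs : ∀ U ∈ s, IsSubrep ρ U) :
    IsSubrep ρ (sSup s) := fun g =>
  show sSup s ≤ (sSup s).comap (ρ g) from
    sSup_le fun U hU v hv => le_sSup hU (hs U hU g v hv)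

theorem isSubrep_socleRep (ρ : Representation K G V) : IsSubrep ρ (socleRep ρ) :=
  isSubrep_sSup fun _ hU => hU.1

theorem inf_socleRep_ne_bot [FiniteDimensional K V] (hU : IsSubrep ρ U) (hne : U ≠ ⊥) :
    U ⊓ socleRep ρ ≠ ⊥ := by
  obtain ⟨W, ⟨hWU, hW, hW0⟩, hmin⟩ := wellFounded_lt.has_min
    {W : Submodule K V | W ≤ U ∧ IsSubrep ρ W ∧ W ≠ ⊥} ⟨U, le_rfl, hU, hne⟩
  have hWS : W ≤ socleRep ρ := le_sSup ⟨hW, hW0, fun W' hW'W hW' => or_iff_not_imp_left.mpr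
    fun hW'0 => hW'W.eq_of_not_lt fun hlt => hmin W' ⟨hW'W.trans hWU, hW', hW'0⟩ hlt⟩
  exact ne_bot_of_le_ne_bot hW0 (le_inf hWU hWS)

theorem socleRep_le_of_finrank_eq_one [FiniteDimensional K V]
    (h1 : Module.finrank K (socleRep ρ) = 1) (hU : IsSubrep ρ U) (hne : U ≠ ⊥) :
    socleRep ρ ≤ U :=
  ((Submodule.isAtom_iff_finrank_eq_one.mpr h1).le_iff_eq (inf_socleRep_ne_bot hU hne)).mp
    inf_le_right ▸ inf_le_left

theorem GInvariantQF.polar_apply (hinv : GInvariantQF ρ Q) (g : G) (x y : V) :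
    polar Q (ρ g x) (ρ g y) = polar Q x y := by
  simp only [polar, ← map_add, hinv g]

theorem IsSubrep.qperp (hinv : GInvariantQF ρ Q) (hU : IsSubrep ρ U) :
    IsSubrep ρ (qperp Q U) := by
  intro g v hv u hu
  have := hv _ (hU g⁻¹ u hu)
  rw [polarBilin_apply_apply] at this ⊢
  rw [← this, ← hinv.polar_apply g (ρ g⁻¹ u) v, Representation.self_inv_apply]

theorem eq_top_of_qperp_eq_bot [FiniteDimensional K V] (h : qperp Q U = ⊥) : U = ⊤ := by
  have := LinearMap.BilinForm.finrank_add_finrank_orthogonal' (B := Q.polarBilin) U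
  rw [← qperp, h, finrank_bot] at this
  exact Submodule.eq_top_of_finrank_eq (le_antisymm (Submodule.finrank_le U) (by omega))

theorem AnisotropicRep.anisotropic_restrict (han : AnisotropicRep ρ Q)
    (htriv : ∀ g, ∀ v ∈ U, ρ g v = v) : (Q.restrict U).Anisotropic := by
  rintro ⟨v, hv⟩ hQv
  have hspan : IsSubrep ρ (K ∙ v) := fun g u hu => by
    obtain ⟨c, rfl⟩ := Submodule.mem_span_singleton.mp hu
    rwa [map_smul, htriv g v hv]
  have := han _ hspan fun u hu => by
    obtain ⟨c, rfl⟩ := Submodule.mem_span_singleton.mp hu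
    rw [QuadraticMap.map_smul, show Q v = 0 from hQv, smul_zero]
  simpa using this

theorem qperp_socleRep_eq_bot [FiniteDimensional K V] (hinv : GInvariantQF ρ Q)
    (hrad : ∀ v ∈ socleRep ρ, (∀ w ∈ socleRep ρ, polar Q v w = 0) → v = 0) :
    qperp Q (socleRep ρ) = ⊥ := by
  by_contra h
  obtain ⟨v, ⟨hv, hvS⟩, hv0⟩ :=
    Submodule.ne_bot_iff _ |>.mp (inf_socleRep_ne_bot ((isSubrep_socleRep ρ).qperp hinv) h)
  exact hv0 <| hrad v hvS fun w hw => by rw [polar_comm]; exact hv w hw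

end Representation

theorem stmt14_general [Fintype K] (h2 : ringChar K = 2) [FiniteDimensional K V]
    (ρ : Representation K G V) (Q : QuadraticForm K V)
    (hinv : GInvariantQF ρ Q) (han : AnisotropicRep ρ Q)
    (htriv : ∀ g, ∀ v ∈ socleRep ρ, ρ g v = v) :
    Module.finrank K ↥(socleRep ρ) ≤ 2 ∧
    (Module.finrank K ↥(socleRep ρ) = 2 →
      socleRep ρ = ⊤ ∧
      (∀ v ∈ socleRep ρ, (∀ w ∈ socleRep ρ, polar Q v w = 0) → v = 0) ∧
      ∃ (α : K) (b : Module.Basis (Fin 2) K V),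
        Irreducible (Polynomial.X ^ 2 + Polynomial.X + Polynomial.C α) ∧
        Q (b 0) = α ∧ Q (b 1) = 1 ∧ polar Q (b 1) (b 0) = 1) ∧
    (Module.finrank K ↥(socleRep ρ) = 1 →
      (∃ e : V, socleRep ρ = Submodule.span K {e} ∧ Q e ≠ 0) ∧
      ¬∃ U₁ U₂ : Submodule K V, IsSubrep ρ U₁ ∧ IsSubrep ρ U₂ ∧
        U₁ ≠ ⊥ ∧ U₂ ≠ ⊥ ∧ IsCompl U₁ U₂) := by
  have : CharP K 2 := ringChar.of_eq h2
  set S := socleRep ρ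
  have hS : (Q.restrict S).Anisotropic := han.anisotropic_restrict htriv
  refine ⟨hS.finrank_le_two, fun h1 => ?_, fun h1 => ?_⟩
  · have hrad : ∀ v ∈ S, (∀ w ∈ S, polar Q v w = 0) → v = 0 := fun v hv hvS => by
      by_contra hv0
      have := hS.finrank_le_one_of_polar_eq_zero (v := ⟨v, hv⟩) (by simpa using hv0)
        fun w => by rw [polar_comm]; exact hvS w w.2
      omega
    have htop : S = ⊤ := eq_top_of_qperp_eq_bot (qperp_socleRep_eq_bot hinv hrad)
    have hQ : Q.Anisotropic := fun v hv =>
      congrArg Subtype.val (hS ⟨v, htop ▸ Submodule.mem_top⟩ hv)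
    exact ⟨htop, hrad, hQ.exists_basis_of_finrank_eq_two (by rw [← finrank_top, ← htop, h1])⟩
  · have hatom : IsAtom S := Submodule.isAtom_iff_finrank_eq_one.mpr h1
    refine ⟨?_, ?_⟩
    · obtain ⟨e, he, he0⟩ := Submodule.ne_bot_iff S |>.mp hatom.ne_bot
      exact ⟨e, eq_span_singleton_of_mem_of_finrank_eq_one h1 he he0,
        fun hQe => he0 (congrArg Subtype.val (hS ⟨e, he⟩ hQe))⟩
    · rintro ⟨U₁, U₂, hU₁, hU₂, hU₁0, hU₂0, hcompl⟩
      exact hatom.ne_bot <| le_bot_iff.mp <| hcompl.inf_eq_bot ▸ le_inf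
        (socleRep_le_of_finrank_eq_one h1 hU₁ hU₁0) (socleRep_le_of_finrank_eq_one h1 hU₂ hU₂0)

/-- anisotropic equivariant quadratic module whose socle is a sum of
trivial modules: the socle has dimension ≤ 2; if 2, it is a non-degenerate orthogonal
summand isometric to `N(K)` equal to `V`; if 1, it is spanned by a vector `e` with
`Q e ≠ 0` and `V` is indecomposable. -/
theorem stmt14 [Fintype K] (h2 : ringChar K = 2) [Finite G] [FiniteDimensional K V]
    (ρ : Representation K G V) (Q : QuadraticForm K V)
    (hinv : GInvariantQF ρ Q) (hnd : QNondeg Q) (han : AnisotropicRep ρ Q)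
    (htriv : ∀ g, ∀ v ∈ socleRep ρ, ρ g v = v) :
    Module.finrank K ↥(socleRep ρ) ≤ 2 ∧
    (Module.finrank K ↥(socleRep ρ) = 2 →
      socleRep ρ = ⊤ ∧
      (∀ v ∈ socleRep ρ, (∀ w ∈ socleRep ρ, polar Q v w = 0) → v = 0) ∧
      ∃ (α : K) (b : Module.Basis (Fin 2) K V),
        Irreducible (Polynomial.X ^ 2 + Polynomial.X + Polynomial.C α) ∧
        Q (b 0) = α ∧ Q (b 1) = 1 ∧ polar Q (b 1) (b 0) = 1) ∧
    (Module.finrank K ↥(socleRep ρ) = 1 →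
      (∃ e : V, socleRep ρ = Submodule.span K {e} ∧ Q e ≠ 0) ∧
      ¬∃ U₁ U₂ : Submodule K V, IsSubrep ρ U₁ ∧ IsSubrep ρ U₂ ∧
        U₁ ≠ ⊥ ∧ U₂ ≠ ⊥ ∧ IsCompl U₁ U₂) :=
  stmt14_general h2 ρ Q hinv han htriv
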